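/- arXiv:1402.0647 — 7 statements merged into one kernel-verified Lean document; each statement's English description precedes it below -/
import Mathlib

section
/- Let (A, m_A) be a commutative local ring and let α, β ∈ m_A be elements of its maximal ideal. If there exists an isomorphism of A-algebras A[[x,y]]/(xy − α) ≅ A[[s,t]]/(st − β), then the principal ideals αA and βA of A are equal. -/
/-!
For an `A`-algebra `R`, the elements of `A` whose image lies in the ideal generated by the values
of all `A`-derivations of `R` form an ideal of `A` that is invariant under `A`-algebra
isomorphisms. For `R = A[[x,y]]/(xy - α)` this ideal is `αA`. The Euler derivation
`x ∂ₓ - y ∂_y` kills `xy - α`, so it descends to `R`, and `α = xy = D(x) y`. Conversely, for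
any derivation `D` of `R`, differentiating `xy = α` gives `x D(y) + y D(x) = 0`; comparing the
coefficients of `y` (resp. `x`) in a lift of this relation shows that `D(x)` and `D(y)` have
constant terms in `αA`. Since every `f` is `f(0) + x g + y h`, all values of `D` have constant
terms in `αA`, and so does every element of `A` in the derivation ideal.
-/

open MvPowerSeries

section DerivationIdeal

variable (A R : Type*) [CommRing A] [CommRing R] [Algebra A R]

def derivationIdeal : Ideal R :=
  Ideal.span (⋃ d : Derivation A R R, Set.range d)

variable {A R}

theorem Derivation.apply_mem_derivationIdeal (d : Derivation A R R) (r : R) :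
    d r ∈ derivationIdeal A R :=
  Ideal.subset_span (Set.mem_iUnion.2 ⟨d, r, rfl⟩)

theorem AlgEquiv.map_mem_derivationIdeal {S : Type*} [CommRing S] [Algebra A S] (e : R ≃ₐ[A] S)
    {r : R} (hr : r ∈ derivationIdeal A R) : e r ∈ derivationIdeal A S := by
  suffices derivationIdeal A R ≤ (derivationIdeal A S).comap e from this hr
  refine Ideal.span_le.2 ?_
  rintro _ ⟨_, ⟨d, rfl⟩, r, rfl⟩
  have hd : ∀ x, e x = 0 → e (d x) = 0 := fun x hx => by
    rw [(map_eq_zero_iff e e.injective).1 hx, d.map_zero, map_zero]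
  rw [SetLike.mem_coe, Ideal.mem_comap, ← Derivation.liftOfSurjective_apply e.surjective hd]
  exact Derivation.apply_mem_derivationIdeal _ _

theorem AlgEquiv.comap_algebraMap_derivationIdeal {S : Type*} [CommRing S] [Algebra A S]
    (e : R ≃ₐ[A] S) :
    (derivationIdeal A R).comap (algebraMap A R) =
      (derivationIdeal A S).comap (algebraMap A S) := by
  ext a
  simp only [Ideal.mem_comap]
  refine ⟨fun h => ?_, fun h => ?_⟩
  · simpa only [AlgEquiv.commutes] using e.map_mem_derivationIdeal h
  · simpa only [AlgEquiv.commutes] using e.symm.map_mem_derivationIdeal h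

end DerivationIdeal

namespace MvPowerSeries

variable {σ A : Type*} [CommRing A]

theorem constantCoeff_mem_span_of_X_mul_add_X_mul_eq {i j : σ} (hij : i ≠ j) {α : A}
    {u v c : MvPowerSeries σ A} (h : X i * v + X j * u = c * (X i * X j - C α)) :
    constantCoeff u ∈ Ideal.span {α} := by
  have hcoeff := congrArg (coeff (Finsupp.single j 1)) h
  have hi : ¬ Finsupp.single i 1 ≤ Finsupp.single j 1 := fun hle => by
    simpa [Finsupp.single_apply, hij] using hle i
  have hij' : ¬ Finsupp.single i 1 + Finsupp.single j 1 ≤ Finsupp.single j 1 := fun hle =>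
    hi (le_trans le_self_add hle)
  rw [X_def, X_def, monomial_mul_monomial, map_add, coeff_monomial_mul, coeff_monomial_mul,
    if_neg hi, if_pos le_rfl, tsub_self, mul_sub, map_sub, coeff_mul_monomial, if_neg hij',
    coeff_mul_C] at hcoeff
  exact Ideal.mem_span_singleton'.2 ⟨-coeff (Finsupp.single j 1) c, by
    rw [← coeff_zero_eq_constantCoeff_apply]; linear_combination -hcoeff⟩

theorem exists_eq_C_add_X_mul_add_X_mul (f : MvPowerSeries (Fin 2) A) :
    ∃ g h : MvPowerSeries (Fin 2) A, f = C (constantCoeff f) + X 0 * g + X 1 * h := by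
  let h : MvPowerSeries (Fin 2) A := fun m =>
    if m 0 = 0 then coeff (m + Finsupp.single 1 1) f else 0
  suffices X 0 ∣ f - C (constantCoeff f) - X 1 * h by
    obtain ⟨g, hg⟩ := this
    exact ⟨g, h, by rw [← hg]; ring⟩
  refine X_dvd_iff.2 fun m hm => ?_
  rw [map_sub, map_sub, coeff_C, X_def, coeff_monomial_mul, one_mul]
  by_cases h1 : Finsupp.single 1 1 ≤ m
  · have hm0 : m ≠ 0 := fun h0 => by simp [h0] at h1
    have hm1 : (m - Finsupp.single 1 1 : Fin 2 →₀ ℕ) 0 = 0 := by simp [hm]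
    rw [if_neg hm0, if_pos h1]
    show _ - _ - (if _ then _ else _) = _
    rw [if_pos hm1, tsub_add_cancel_of_le h1]
    ring
  · have hm0 : m = 0 := by
      ext i
      fin_cases i
      · exact hm
      · simpa [Finsupp.single_le_iff] using h1
    subst hm0
    simp [coeff_zero_eq_constantCoeff]

variable (A) in
noncomputable def eulerDerivation :
    Derivation A (MvPowerSeries (Fin 2) A) (MvPowerSeries (Fin 2) A) :=
  (X 0 : MvPowerSeries (Fin 2) A) • pderiv A (0 : Fin 2) -
    (X 1 : MvPowerSeries (Fin 2) A) • pderiv A (1 : Fin 2)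

theorem eulerDerivation_apply (f : MvPowerSeries (Fin 2) A) :
    eulerDerivation A f = X 0 * pderiv A 0 f - X 1 * pderiv A 1 f :=
  rfl

theorem eulerDerivation_X_zero : eulerDerivation A (X 0) = X 0 := by
  simp [eulerDerivation_apply]

theorem eulerDerivation_X_mul_X_sub_C (α : A) : eulerDerivation A (X 0 * X 1 - C α) = 0 := by
  simp only [eulerDerivation_apply, map_sub, Derivation.leibniz, pderiv_X_self, pderiv_C,
    pderiv_X_of_ne zero_ne_one, pderiv_X_of_ne one_ne_zero, smul_eq_mul]
  ring

end MvPowerSeries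

section

variable {A : Type*} [CommRing A]

noncomputable abbrev nodeIdeal (α : A) : Ideal (MvPowerSeries (Fin 2) A) :=
  Ideal.span {X 0 * X 1 - C α}

noncomputable abbrev NodeRing (α : A) : Type _ := MvPowerSeries (Fin 2) A ⧸ nodeIdeal α

namespace NodeRing

theorem mk_X_mul_mk_X (α : A) :
    Ideal.Quotient.mk (nodeIdeal α) (X 0) * Ideal.Quotient.mk (nodeIdeal α) (X 1) =
      algebraMap A (NodeRing α) α := by
  rw [← map_mul, ← Ideal.Quotient.mk_algebraMap, ← c_eq_algebraMap, Ideal.Quotient.eq]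
  exact Ideal.mem_span_singleton_self _

theorem mkₐ_eulerDerivation_eq_zero {α : A} {f : MvPowerSeries (Fin 2) A}
    (hf : Ideal.Quotient.mkₐ A (nodeIdeal α) f = 0) :
    Ideal.Quotient.mkₐ A (nodeIdeal α) (MvPowerSeries.eulerDerivation A f) = 0 := by
  rw [Ideal.Quotient.mkₐ_eq_mk, Ideal.Quotient.eq_zero_iff_mem] at hf ⊢
  obtain ⟨c, rfl⟩ := Ideal.mem_span_singleton'.1 hf
  rw [Derivation.leibniz, eulerDerivation_X_mul_X_sub_C, smul_zero, zero_add, smul_eq_mul]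
  exact Ideal.mul_mem_right _ _ (Ideal.mem_span_singleton_self _)

noncomputable def eulerDerivation (α : A) : Derivation A (NodeRing α) (NodeRing α) :=
  (MvPowerSeries.eulerDerivation A).liftOfSurjective
    (Ideal.Quotient.mkₐ_surjective A (nodeIdeal α)) fun _ => mkₐ_eulerDerivation_eq_zero

theorem eulerDerivation_mk (α : A) (f : MvPowerSeries (Fin 2) A) :
    eulerDerivation α (Ideal.Quotient.mk (nodeIdeal α) f) =
      Ideal.Quotient.mk (nodeIdeal α) (MvPowerSeries.eulerDerivation A f) :=
  Derivation.liftOfSurjective_apply (Ideal.Quotient.mkₐ_surjective A (nodeIdeal α))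
    (fun _ => mkₐ_eulerDerivation_eq_zero) f

theorem algebraMap_mem_derivationIdeal (α : A) :
    algebraMap A (NodeRing α) α ∈ derivationIdeal A (NodeRing α) := by
  rw [← mk_X_mul_mk_X, ← eulerDerivation_X_zero, ← eulerDerivation_mk]
  exact Ideal.mul_mem_right _ _ (Derivation.apply_mem_derivationIdeal _ _)

noncomputable def constantTerm (α : A) : NodeRing α →+* A ⧸ Ideal.span {α} :=
  Ideal.quotientMap _ constantCoeff <| by
    rw [← Ideal.map_le_iff_le_comap, Ideal.map_span, Set.image_singleton, Ideal.span_le,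
      Set.singleton_subset_iff]
    simp

theorem constantTerm_mk (α : A) (f : MvPowerSeries (Fin 2) A) :
    constantTerm α (Ideal.Quotient.mk (nodeIdeal α) f) =
      Ideal.Quotient.mk (Ideal.span {α}) (constantCoeff f) :=
  Ideal.quotientMap_mk

theorem constantTerm_algebraMap (α a : A) :
    constantTerm α (algebraMap A (NodeRing α) a) = Ideal.Quotient.mk (Ideal.span {α}) a := by
  rw [← Ideal.Quotient.mk_algebraMap, ← c_eq_algebraMap, constantTerm_mk, constantCoeff_C]

theorem constantTerm_derivation_mk_X (α : A) (D : Derivation A (NodeRing α) (NodeRing α)) :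
    constantTerm α (D (Ideal.Quotient.mk (nodeIdeal α) (X 0))) = 0 ∧
      constantTerm α (D (Ideal.Quotient.mk (nodeIdeal α) (X 1))) = 0 := by
  obtain ⟨u, hu⟩ := Ideal.Quotient.mk_surjective (D (Ideal.Quotient.mk (nodeIdeal α) (X 0)))
  obtain ⟨v, hv⟩ := Ideal.Quotient.mk_surjective (D (Ideal.Quotient.mk (nodeIdeal α) (X 1)))
  have hrel : X 0 * v + X 1 * u ∈ nodeIdeal α := by
    have hleibniz := D.leibniz (Ideal.Quotient.mk (nodeIdeal α) (X 0))
      (Ideal.Quotient.mk (nodeIdeal α) (X 1))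
    rw [mk_X_mul_mk_X, D.map_algebraMap, smul_eq_mul, smul_eq_mul, ← hu, ← hv] at hleibniz
    rw [← Ideal.Quotient.eq_zero_iff_mem, map_add, map_mul, map_mul, hleibniz, add_comm]
  obtain ⟨c, hc⟩ := Ideal.mem_span_singleton'.1 hrel
  rw [← hu, ← hv, constantTerm_mk, constantTerm_mk, Ideal.Quotient.eq_zero_iff_mem,
    Ideal.Quotient.eq_zero_iff_mem]
  exact ⟨constantCoeff_mem_span_of_X_mul_add_X_mul_eq (by decide) hc.symm,
    constantCoeff_mem_span_of_X_mul_add_X_mul_eq (i := 1) (j := 0) (u := v) (v := u) (c := c)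
      (by decide) (by linear_combination -hc)⟩

theorem constantTerm_derivation (α : A) (D : Derivation A (NodeRing α) (NodeRing α))
    (r : NodeRing α) : constantTerm α (D r) = 0 := by
  obtain ⟨f, rfl⟩ := Ideal.Quotient.mk_surjective r
  obtain ⟨g, h, hf⟩ := exists_eq_C_add_X_mul_add_X_mul f
  have hx : constantTerm α (Ideal.Quotient.mk (nodeIdeal α) (X 0)) = 0 := by
    rw [constantTerm_mk, constantCoeff_X, map_zero]
  have hy : constantTerm α (Ideal.Quotient.mk (nodeIdeal α) (X 1)) = 0 := by
    rw [constantTerm_mk, constantCoeff_X, map_zero]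
  obtain ⟨hDx, hDy⟩ := constantTerm_derivation_mk_X α D
  have hmk : Ideal.Quotient.mk (nodeIdeal α) f =
      algebraMap A (NodeRing α) (constantCoeff f) +
      Ideal.Quotient.mk (nodeIdeal α) (X 0) * Ideal.Quotient.mk (nodeIdeal α) g +
      Ideal.Quotient.mk (nodeIdeal α) (X 1) * Ideal.Quotient.mk (nodeIdeal α) h := by
    rw [← Ideal.Quotient.mk_algebraMap, ← c_eq_algebraMap, ← map_mul, ← map_mul, ← map_add,
      ← map_add, ← hf]
  rw [hmk, D.map_add, D.map_add, D.map_algebraMap, D.leibniz, D.leibniz]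
  simp [hx, hy, hDx, hDy]

theorem comap_algebraMap_derivationIdeal (α : A) :
    (derivationIdeal A (NodeRing α)).comap (algebraMap A (NodeRing α)) = Ideal.span {α} := by
  refine le_antisymm (fun a ha => ?_)
    (Ideal.span_singleton_le_iff_mem _ |>.2 (algebraMap_mem_derivationIdeal α))
  have hker : derivationIdeal A (NodeRing α) ≤ RingHom.ker (constantTerm α) :=
    Ideal.span_le.2 <| by
      rintro _ ⟨_, ⟨D, rfl⟩, r, rfl⟩
      exact constantTerm_derivation α D r
  simpa only [RingHom.mem_ker, constantTerm_algebraMap, Ideal.Quotient.eq_zero_iff_mem]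
    using hker ha

end NodeRing

end

theorem stmt1_general (A : Type*) [CommRing A] (α β : A)
    (h : Nonempty
      ((MvPowerSeries (Fin 2) A ⧸
          Ideal.span {MvPowerSeries.X 0 * MvPowerSeries.X 1 - MvPowerSeries.C (σ := Fin 2) (R := A) α}) ≃ₐ[A]
       (MvPowerSeries (Fin 2) A ⧸
          Ideal.span {MvPowerSeries.X 0 * MvPowerSeries.X 1 - MvPowerSeries.C (σ := Fin 2) (R := A) β}))) :
    Ideal.span {α} = Ideal.span {β} := by
  obtain ⟨e⟩ := h
  rw [← NodeRing.comap_algebraMap_derivationIdeal α,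
    ← NodeRing.comap_algebraMap_derivationIdeal β]
  exact e.comap_algebraMap_derivationIdeal

/-- Let `(A, m_A)` be a commutative local ring and `α, β ∈ m_A`.  If there is an
isomorphism of `A`-algebras `A[[x,y]]/(xy - α) ≅ A[[s,t]]/(st - β)`, then the
principal ideals `αA` and `βA` are equal. -/
theorem stmt1 (A : Type*) [CommRing A] [IsLocalRing A] (α β : A)
    (hα : α ∈ IsLocalRing.maximalIdeal A) (hβ : β ∈ IsLocalRing.maximalIdeal A)
    (h : Nonempty
      ((MvPowerSeries (Fin 2) A ⧸
          Ideal.span {MvPowerSeries.X 0 * MvPowerSeries.X 1 - MvPowerSeries.C (σ := Fin 2) (R := A) α}) ≃ₐ[A]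
       (MvPowerSeries (Fin 2) A ⧸
          Ideal.span {MvPowerSeries.X 0 * MvPowerSeries.X 1 - MvPowerSeries.C (σ := Fin 2) (R := A) β}))) :
    Ideal.span {α} = Ideal.span {β} :=
  stmt1_general A α β h
end

section
/- Let R be a commutative local ring, let φ : R → R' be a flat local homomorphism to a commutative local ring R' (so φ is faithfully flat and maps the maximal ideal of R into that of R'), and let I = (d_1, …, d_n) be a finitely generated ideal of R. If the extended ideal I·R' is a principal ideal of R', then I is a principal ideal of R. -/
open IsLocalRing

/-- By Nakayama: were no generator in `S` enough, every element of `S` would be a non-unit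
multiple of the generator `x`, so `span S ≤ 𝔪 • span S` and hence `span S = ⊥`. -/
theorem IsLocalRing.exists_span_eq_span_singleton_of_isPrincipal {R : Type*} [CommRing R]
    [IsLocalRing R] {S : Set R} (hS : S.Nonempty) (h : (Ideal.span S).IsPrincipal) :
    ∃ s ∈ S, Ideal.span S = Ideal.span {s} := by
  obtain ⟨x, hx⟩ := h
  change Ideal.span S = Ideal.span {x} at hx
  by_contra! hne
  have hle : Ideal.span S ≤ maximalIdeal R • Ideal.span S := by
    refine Ideal.span_le.mpr fun s hs => ?_
    obtain ⟨b, rfl⟩ := Ideal.mem_span_singleton'.mp (hx ▸ Ideal.subset_span hs)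
    have hb : b ∈ maximalIdeal R := fun hunit =>
      hne _ hs (hx.trans (Ideal.span_singleton_mul_left_unit hunit x).symm)
    exact Submodule.smul_mem_smul hb (hx ▸ Ideal.mem_span_singleton_self x)
  have hbot : Ideal.span S = ⊥ :=
    Submodule.eq_bot_of_le_smul_of_le_jacobson_bot _ _ (hx ▸ Submodule.fg_span_singleton x) hle
      (maximalIdeal_le_jacobson ⊥)
  obtain ⟨s, hs⟩ := hS
  refine hne s hs (hbot.trans (Ideal.span_singleton_eq_bot.mpr ?_).symm)
  simpa [hbot] using Ideal.subset_span hs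

theorem Ideal.isPrincipal_of_isPrincipal_map_of_faithfullyFlat {A B : Type*} [CommRing A]
    [CommRing B] [IsLocalRing B] [Algebra A B] [Module.FaithfullyFlat A B] (I : Ideal A)
    (h : (I.map (algebraMap A B)).IsPrincipal) : I.IsPrincipal := by
  obtain ⟨_, ⟨a, -, rfl⟩, hspan⟩ := exists_span_eq_span_singleton_of_isPrincipal
    (S := algebraMap A B '' I) ⟨_, 0, I.zero_mem, map_zero _⟩ h
  refine ⟨a, Ideal.map_injective_of_faithfullyFlat (B := B) ?_⟩
  rw [Ideal.submodule_span_eq, Ideal.map_span, Set.image_singleton]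
  exact hspan

theorem stmt2_general (R R' : Type*) [CommRing R] [CommRing R'] [IsLocalRing R] [IsLocalRing R']
    (φ : R →+* R') (hflat : φ.Flat)
    (hlocal : ∀ x ∈ IsLocalRing.maximalIdeal R, φ x ∈ IsLocalRing.maximalIdeal R')
    (I : Ideal R)
    (hprin : (I.map φ).IsPrincipal) :
    I.IsPrincipal := by
  let : Algebra R R' := φ.toAlgebra
  have : Module.Flat R R' := hflat
  have : IsLocalHom φ :=
    ((local_hom_TFAE φ).out 0 1).mpr (Set.image_subset_iff.mpr hlocal)
  have : Module.FaithfullyFlat R R' := .of_flat_of_isLocalHom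
  exact I.isPrincipal_of_isPrincipal_map_of_faithfullyFlat hprin

/-- Let `R` be a local ring, `φ : R → R'` a flat local homomorphism of local rings,
and `I = (d_1, …, d_n)` a finitely generated ideal of `R`.  If the extended ideal
`I·R'` is principal, then `I` is principal. -/
theorem stmt2 (R R' : Type*) [CommRing R] [CommRing R'] [IsLocalRing R] [IsLocalRing R']
    (φ : R →+* R') (hflat : φ.Flat)
    (hlocal : ∀ x ∈ IsLocalRing.maximalIdeal R, φ x ∈ IsLocalRing.maximalIdeal R')
    (n : ℕ) (d : Fin n → R) (I : Ideal R) (hI : I = Ideal.span (Set.range d))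
    (hprin : (I.map φ).IsPrincipal) :
    I.IsPrincipal :=
  stmt2_general R R' φ hflat hlocal I hprin
end

section
/- Let M be a cyclic additive submonoid of ℕ × ℕ (that is, M is generated by a single element). Then the saturation of M is also a cyclic submonoid of ℕ × ℕ. -/
/-!
Write the generator as `g = d • v` with `d = gcd g.1 g.2` and `v` primitive. Scaling the generator
by a positive integer does not change the saturation, and the cyclic monoid generated by a
primitive `v = (p, q)` is already saturated: if `a • m = n • v` then `a` divides
`gcd (n * p) (n * q) = n * gcd p q = n`, so `m` is a multiple of `v`.
-/

def saturationSet (M : AddSubmonoid (ℕ × ℕ)) : Set (ℕ × ℕ) :=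
  {m | ∃ a : ℕ, 0 < a ∧ a • m ∈ M}

theorem saturationSet_closure_nsmul {d : ℕ} (hd : 0 < d) (v : ℕ × ℕ) :
    saturationSet (AddSubmonoid.closure {d • v}) = saturationSet (AddSubmonoid.closure {v}) := by
  ext m
  simp only [saturationSet, Set.mem_ofPred_eq, AddSubmonoid.mem_closure_singleton]
  constructor
  · rintro ⟨a, ha, n, hn⟩
    exact ⟨a, ha, n * d, by rw [mul_smul, hn]⟩
  · rintro ⟨a, ha, n, hn⟩
    exact ⟨d * a, Nat.mul_pos hd ha, n, by rw [smul_comm, hn, mul_smul]⟩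

theorem saturationSet_closure_zero :
    saturationSet (AddSubmonoid.closure {0}) = ↑(AddSubmonoid.closure {(0 : ℕ × ℕ)}) := by
  ext m
  simp only [saturationSet, Set.mem_ofPred_eq, SetLike.mem_coe,
    AddSubmonoid.closure_singleton_zero, AddSubmonoid.mem_bot]
  constructor
  · rintro ⟨a, ha, ham⟩
    exact (smul_eq_zero.mp ham).resolve_left ha.ne'
  · rintro rfl
    exact ⟨1, one_pos, smul_zero 1⟩

theorem saturationSet_closure_of_coprime {p q : ℕ} (hpq : p.Coprime q) :
    saturationSet (AddSubmonoid.closure {(p, q)}) = ↑(AddSubmonoid.closure {(p, q)}) := by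
  ext ⟨m₁, m₂⟩
  simp only [saturationSet, Set.mem_ofPred_eq, SetLike.mem_coe, AddSubmonoid.mem_closure_singleton,
    Prod.smul_mk, smul_eq_mul, Prod.mk.injEq]
  constructor
  · rintro ⟨a, ha, n, hp, hq⟩
    obtain ⟨k, rfl⟩ : a ∣ n := by
      simpa [Nat.gcd_mul_left, hpq] using
        Nat.dvd_gcd (Dvd.intro _ hp.symm) (Dvd.intro _ hq.symm)
    rw [mul_assoc] at hp hq
    exact ⟨k, Nat.eq_of_mul_eq_mul_left ha hp, Nat.eq_of_mul_eq_mul_left ha hq⟩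
  · rintro ⟨n, hp, hq⟩
    exact ⟨1, one_pos, n, by rw [hp, one_mul], by rw [hq, one_mul]⟩

/-- The saturation of a cyclic additive submonoid of `ℕ × ℕ` is again a cyclic
submonoid of `ℕ × ℕ`. -/
theorem stmt6 (M : AddSubmonoid (ℕ × ℕ)) (hcyc : ∃ g, M = AddSubmonoid.closure {g}) :
    ∃ g : ℕ × ℕ, saturationSet M = ↑(AddSubmonoid.closure {g} : AddSubmonoid (ℕ × ℕ)) := by
  obtain ⟨⟨p, q⟩, rfl⟩ := hcyc
  rcases (p.gcd q).eq_zero_or_pos with hd | hd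
  · obtain ⟨rfl, rfl⟩ := Nat.gcd_eq_zero_iff.mp hd
    exact ⟨0, saturationSet_closure_zero⟩
  · have hpq : (p, q) = p.gcd q • (p / p.gcd q, q / p.gcd q) := by
      simp only [Prod.smul_mk, smul_eq_mul, Nat.mul_div_cancel' (Nat.gcd_dvd_left p q),
        Nat.mul_div_cancel' (Nat.gcd_dvd_right p q)]
    refine ⟨(p / p.gcd q, q / p.gcd q), ?_⟩
    rw [hpq, saturationSet_closure_nsmul hd,
      saturationSet_closure_of_coprime (Nat.coprime_div_gcd_div_gcd hd)]
end

section
/- Let G be a simple graph and let H_1 and H_2 be subgraphs of G, each of which is 2-vertex-connected, and suppose H_1 and H_2 contain a common edge. Then the union H_1 ∪ H_2 is 2-vertex-connected. -/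
/-! Deleting a vertex `v` from `H₁ ⊔ H₂` leaves `(H₁ - v) ⊔ (H₂ - v)`, a union of two connected
subgraphs. It is connected because the subgraphs still share a vertex: the two ends of the
common edge lie in both, and at least one of them differs from `v`. -/

/-- A subgraph `H` of a simple graph `G` is 2-vertex-connected if it is connected
(in particular nonempty) and remains connected after deleting any one of its
vertices (together with all incident edges). -/
def TwoVertexConnected {V : Type*} {G : SimpleGraph V} (H : G.Subgraph) : Prop :=
  H.Connected ∧ ∀ v ∈ H.verts, (H.deleteVerts {v}).Connected

namespace SimpleGraph.Subgraph

variable {V : Type*} {G : SimpleGraph V}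

lemma deleteVerts_sup (H₁ H₂ : G.Subgraph) (s : Set V) :
    (H₁ ⊔ H₂).deleteVerts s = H₁.deleteVerts s ⊔ H₂.deleteVerts s := by
  ext x y
  · simp [Set.union_sdiff_distrib]
  · simp only [deleteVerts_adj, sup_adj, verts_sup, Set.mem_union]
    grind [Adj.fst_mem, Adj.snd_mem]

lemma deleteVerts_eq_self_of_disjoint {H : G.Subgraph} {s : Set V} (h : Disjoint H.verts s) :
    H.deleteVerts s = H := by
  rw [← deleteVerts_inter_verts_left_eq, Set.disjoint_iff_inter_eq_empty.mp h, deleteVerts_empty]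

lemma verts_inf_nontrivial_of_mem_edgeSet {H₁ H₂ : G.Subgraph} {e : Sym2 V}
    (he₁ : e ∈ H₁.edgeSet) (he₂ : e ∈ H₂.edgeSet) : (H₁ ⊓ H₂).verts.Nontrivial := by
  induction e with
  | _ u w =>
    rw [Subgraph.mem_edgeSet] at he₁ he₂
    exact ⟨u, ⟨he₁.fst_mem, he₂.fst_mem⟩, w, ⟨he₁.snd_mem, he₂.snd_mem⟩, he₁.ne⟩

end SimpleGraph.Subgraph

open SimpleGraph Subgraph

namespace TwoVertexConnected

variable {V : Type*} {G : SimpleGraph V} {H₁ H₂ : G.Subgraph}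

lemma connected_deleteVerts_singleton (h : TwoVertexConnected H₁) (v : V) :
    (H₁.deleteVerts {v}).Connected := by
  by_cases hv : v ∈ H₁.verts
  · exact h.2 v hv
  · rw [deleteVerts_eq_self_of_disjoint (Set.disjoint_singleton_right.mpr hv)]
    exact h.1

lemma sup (h₁ : TwoVertexConnected H₁) (h₂ : TwoVertexConnected H₂)
    (hshared : (H₁ ⊓ H₂).verts.Nontrivial) : TwoVertexConnected (H₁ ⊔ H₂) := by
  refine ⟨connected_sup h₁.1.preconnected h₂.1.preconnected hshared.nonempty, fun v _ => ?_⟩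
  obtain ⟨x, ⟨hx₁, hx₂⟩, hxv⟩ := hshared.exists_ne v
  rw [deleteVerts_sup]
  exact connected_sup (h₁.connected_deleteVerts_singleton v).preconnected
    (h₂.connected_deleteVerts_singleton v).preconnected ⟨x, ⟨hx₁, hxv⟩, ⟨hx₂, hxv⟩⟩

end TwoVertexConnected

/-- If `H₁` and `H₂` are 2-vertex-connected subgraphs of `G` containing a common
edge, then `H₁ ∪ H₂` is 2-vertex-connected. -/
theorem stmt8 {V : Type*} {G : SimpleGraph V} (H₁ H₂ : G.Subgraph)
    (h₁ : TwoVertexConnected H₁) (h₂ : TwoVertexConnected H₂)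
    (e : Sym2 V) (he₁ : e ∈ H₁.edgeSet) (he₂ : e ∈ H₂.edgeSet) :
    TwoVertexConnected (H₁ ⊔ H₂) :=
  h₁.sup h₂ (verts_inf_nontrivial_of_mem_edgeSet he₁ he₂)
end

section
/- Let K be a field equipped with a discrete additive valuation v : K → ℤ ∪ {∞} (so v(0) = ∞, v(ab) = v(a) + v(b), and v(a+b) ≥ min(v(a), v(b))). Let n ≥ m > 0 and let f = Σ_{i=m}^{n} f_i T^i ∈ K[T] be a polynomial with zero constant coefficient such that v(f_i) ≥ 0 for all i and v(f_m) = v(f_n) = 0. Let g = Σ_{i ≥ 1} f^i ∈ K[[T]] (this sum converges coefficientwise since f has zero constant coefficient; equivalently g = f·(1−f)^{-1}), and write g = Σ_{j ≥ 1} g_j T^j. Then for every integer N ≥ 1, at least one of g_N, g_{N+1}, …, g_{N+n} satisfies v(g_j) = 0. In particular liminf_{j → ∞} v(g_j) = 0. -/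
/-!
Since `f` has no constant term, `g = f + f g`, i.e. `g_j = f_j + ∑_{a + b = j} f_a g_b`. All `g_j`
are integral and `g_m = f_m` is a unit. If `g_r` is a unit (`r ≥ 1`) while `g_{r+1}, …, g_{r+n-1}`
lie in the maximal ideal, then in `g_{r+n} = ∑_{0 < a ≤ n} f_a g_{r+n-a}` the only unit term is
`f_n g_r`, so `g_{r+n}` is a unit. Hence the unit coefficients of `g` start at `m` and are never more
than `n` apart.
-/

open Finset

theorem Nat.exists_mem_Icc_of_gap_le {P : ℕ → Prop} {m n : ℕ} (hmn : m ≤ n)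
    (hPm : P m) (hstep : ∀ r, m ≤ r → P r → ∃ j, r < j ∧ j ≤ r + n ∧ P j) (N : ℕ) :
    ∃ j, N ≤ j ∧ j ≤ N + n ∧ P j := by
  induction N with
  | zero => exact ⟨m, Nat.zero_le m, by omega, hPm⟩
  | succ N ih =>
    by_cases hNm : N + 1 ≤ m
    · exact ⟨m, hNm, by omega, hPm⟩
    obtain ⟨j, hNj, hjN, hPj⟩ := ih
    rcases hNj.lt_or_eq with hNj | rfl
    · exact ⟨j, hNj, by omega, hPj⟩
    · obtain ⟨k, hNk, hkN, hPk⟩ := hstep N (by omega) hPj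
      exact ⟨k, hNk, by omega, hPk⟩

namespace Polynomial

variable {R : Type*} [Semiring R] {f : R[X]}

theorem coeff_pow_eq_zero_of_lt (hf : f.coeff 0 = 0) {i j : ℕ} (hji : j < i) :
    (f ^ i).coeff j = 0 := by
  obtain ⟨q, rfl⟩ := X_dvd_iff.mpr hf
  rw [(commute_X q).mul_pow, coeff_X_pow_mul', if_neg hji.not_ge]

theorem coeff_sum_range_pow_succ (hf : f.coeff 0 = 0) {j M : ℕ} (hjM : j ≤ M) :
    (∑ i ∈ range M, f ^ (i + 1)).coeff j = ∑ i ∈ Icc 1 j, (f ^ i).coeff j := by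
  rw [finsetSum_coeff, range_eq_Ico, sum_Ico_add' (fun i ↦ (f ^ i).coeff j), zero_add,
    Ico_add_one_right_eq_Icc]
  refine (sum_subset (Icc_subset_Icc_right hjM) fun i hi hij ↦ ?_).symm
  exact coeff_pow_eq_zero_of_lt hf (by simp_all)

theorem eq_coeff_add_sum_mul_of_sum_coeff_pow (hf : f.coeff 0 = 0) {g : ℕ → R}
    (hg : ∀ j, g j = ∑ i ∈ Icc 1 j, (f ^ i).coeff j) (j : ℕ) :
    g j = f.coeff j + ∑ p ∈ antidiagonal j, f.coeff p.1 * g p.2 := by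
  have hsum : ∑ i ∈ range (j + 1), f ^ (i + 1) = f + f * ∑ i ∈ range j, f ^ (i + 1) := by
    simp only [sum_range_succ', mul_sum, ← pow_succ', zero_add, pow_one, add_comm]
  rw [hg, ← coeff_sum_range_pow_succ hf j.le_succ, hsum, coeff_add, coeff_mul]
  congr 1
  refine sum_congr rfl fun p hp ↦ ?_
  rw [hg, coeff_sum_range_pow_succ hf (HasAntidiagonal.antidiagonal.snd_le hp)]

theorem eq_coeff_of_sum_coeff_pow {g : ℕ → R} (hg : ∀ j, g j = ∑ i ∈ Icc 1 j, (f ^ i).coeff j)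
    {m : ℕ} (hm : 0 < m) (hlow : ∀ i < m, f.coeff i = 0) : g m = f.coeff m := by
  rw [eq_coeff_add_sum_mul_of_sum_coeff_pow (hlow 0 hm) hg, sum_eq_zero fun p hp ↦ ?_, add_zero]
  rcases (HasAntidiagonal.antidiagonal.fst_le hp).lt_or_eq with hlt | heq
  · rw [hlow _ hlt, zero_mul]
  · rw [show p.2 = 0 by have := mem_antidiagonal.mp hp; omega, hg]
    simp

end Polynomial

namespace AddValuation

open Polynomial

variable {R Γ₀ : Type*} [Ring R] [LinearOrderedAddCommGroupWithTop Γ₀] (v : AddValuation R Γ₀)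
  {f : R[X]}

theorem coeff_pow_nonneg (hf : ∀ i, 0 ≤ v (f.coeff i)) (k j : ℕ) : 0 ≤ v ((f ^ k).coeff j) := by
  induction k generalizing j with
  | zero => rw [pow_zero, coeff_one]; split_ifs <;> simp
  | succ k ih =>
    rw [pow_succ', coeff_mul]
    exact v.map_le_sum fun p _ ↦ (v.map_mul _ _).symm ▸ add_nonneg (hf _) (ih _)

theorem map_eq_zero_of_gap {n r : ℕ} {g : ℕ → R} (hf0 : f.coeff 0 = 0)
    (hhigh : ∀ i, n < i → f.coeff i = 0) (hint : ∀ i, 0 ≤ v (f.coeff i))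
    (hfn : v (f.coeff n) = 0)
    (hrec : ∀ j, g j = f.coeff j + ∑ p ∈ antidiagonal j, f.coeff p.1 * g p.2)
    (hr : 0 < r) (hgr : v (g r) = 0) (hgap : ∀ b, r < b → b < r + n → 0 < v (g b)) :
    v (g (r + n)) = 0 := by
  have hmem : (n, r) ∈ antidiagonal (r + n) := mem_antidiagonal.mpr (add_comm n r)
  have hlead : v (f.coeff n * g r) = 0 := by rw [v.map_mul, hfn, hgr, add_zero]
  have hrest : 0 < v (∑ p ∈ (antidiagonal (r + n)).erase (n, r), f.coeff p.1 * g p.2) := by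
    refine v.map_lt_sum' LinearOrderedAddCommGroupWithTop.top_pos fun p hp ↦ ?_
    obtain ⟨hpne, hp⟩ := mem_erase.mp hp
    have hsum := mem_antidiagonal.mp hp
    rcases Nat.eq_zero_or_pos p.1 with h0 | hpos
    · simp [h0, hf0]
    rcases lt_or_ge n p.1 with hn | hn
    · simp [hhigh _ hn]
    have hne : p.1 ≠ n := fun h ↦ hpne (Prod.ext h (by omega))
    rw [v.map_mul]
    exact (hgap _ (by omega) (by omega)).trans_le (le_add_of_nonneg_left (hint _))
  rw [hrec, hhigh _ (by omega), zero_add, ← add_sum_erase _ _ hmem,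
    v.map_add_eq_of_lt_left (by rwa [hlead]), hlead]

end AddValuation

/-- Let `K` be a field with a discrete additive valuation `v : K → ℤ ∪ {∞}`.
Let `f = Σ_{i=m}^{n} f_i T^i ∈ K[T]` (with `0 < m ≤ n`) have zero constant
coefficient, `v(f_i) ≥ 0` for all `i`, and `v(f_m) = v(f_n) = 0`.  Let
`g = Σ_{i ≥ 1} f^i`, with coefficients `g_j = Σ_{i=1}^{j} coeff_j (f^i)`.  Then for
every `N ≥ 1`, at least one of `g_N, …, g_{N+n}` has valuation `0`. -/
theorem stmt12 {K : Type*} [Field K] (v : K → WithTop ℤ)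
    (hv0 : v 0 = ⊤)
    (hvmul : ∀ a b : K, v (a * b) = v a + v b)
    (hvadd : ∀ a b : K, min (v a) (v b) ≤ v (a + b))
    (m n : ℕ) (hm : 0 < m) (hmn : m ≤ n)
    (f : Polynomial K)
    (hlow : ∀ i, i < m → f.coeff i = 0)
    (hhigh : ∀ i, n < i → f.coeff i = 0)
    (hint : ∀ i, 0 ≤ v (f.coeff i))
    (hfm : v (f.coeff m) = 0) (hfn : v (f.coeff n) = 0)
    (g : ℕ → K) (hg : ∀ j, g j = ∑ i ∈ Finset.Icc 1 j, (f ^ i).coeff j) :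
    ∀ N : ℕ, 1 ≤ N → ∃ j, N ≤ j ∧ j ≤ N + n ∧ v (g j) = 0 := by
  have hv1 : v 1 = 0 := by
    have h := hvmul (f.coeff m) 1
    rwa [mul_one, hfm, zero_add, eq_comm] at h
  let w : AddValuation K (WithTop ℤ) := AddValuation.of v hv0 hv1 hvadd hvmul
  have hf0 : f.coeff 0 = 0 := hlow 0 hm
  have hrec := Polynomial.eq_coeff_add_sum_mul_of_sum_coeff_pow hf0 hg
  have hg_nonneg (j : ℕ) : 0 ≤ w (g j) :=
    (hg j).symm ▸ w.map_le_sum fun i _ ↦ w.coeff_pow_nonneg hint i j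
  have hgm : v (g m) = 0 := by rw [Polynomial.eq_coeff_of_sum_coeff_pow hg hm hlow, hfm]
  intro N _
  refine Nat.exists_mem_Icc_of_gap_le hmn hgm (fun r hr hgr ↦ ?_) N
  by_contra! hgap
  refine hgap (r + n) (by omega) le_rfl ?_
  exact w.map_eq_zero_of_gap hf0 hhigh hint hfn hrec (by omega) hgr
    fun b hrb hbn ↦ (hg_nonneg b).lt_of_ne' (hgap b hrb hbn.le)
end

section
/- Let K be a field equipped with a discrete additive valuation v : K → ℤ ∪ {∞} (so v(0) = ∞, v(ab) = v(a) + v(b), and v(a+b) ≥ min(v(a), v(b))). Let f = Σ_{i=0}^{d} f_i T^i ∈ K[T] be a polynomial of degree d with f_0 ≠ 0, satisfying v(f_i) ≥ 0 for all i and v(f_0) = v(f_d) = 0 (i.e., the Newton polygon of f has the single gradient 0). Let w = (w_i)_{i ∈ ℤ} be a doubly infinite sequence in K, not identically zero, satisfying f·w = 0, i.e., Σ_{i=0}^{d} f_i w_{k−i} = 0 for every k ∈ ℤ. Set e = min{ v(w_i) : 0 ≤ i ≤ d−1 }. Then liminf_{i → +∞} v(w_i) = e. -/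
/-!
Solving `f·w = 0` for its first or its last term, where `f` has integral coefficients and unit
extreme coefficients, bounds `v (w (k + d))` and `v (w k)` below by the minimum of `v ∘ w` over the
`d` terms in between. Hence the minimum of `v ∘ w` over a window of `d` consecutive terms does not
change when the window slides by one step, so every window has minimum `e`: this bounds `v ∘ w`
below by `e`, and each window attains it.
-/

open Finset

namespace AddValuation

variable {R Γ₀ : Type*} [Ring R] [LinearOrderedAddCommMonoidWithTop Γ₀] (v : AddValuation R Γ₀)

theorem le_map_of_sum_eq_zero {ι : Type*} [DecidableEq ι] {s : Finset ι} {x : ι → R}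
    (hsum : ∑ i ∈ s, x i = 0) {j : ι} (hj : j ∈ s) {g : Γ₀}
    (hg : ∀ i ∈ s, i ≠ j → g ≤ v (x i)) : g ≤ v (x j) := by
  have hxj : x j = -∑ i ∈ s.erase j, x i := by
    rw [eq_neg_iff_add_eq_zero, add_sum_erase s x hj, hsum]
  rw [hxj, v.map_neg]
  exact v.map_le_sum fun i hi => hg i (mem_of_mem_erase hi) (ne_of_mem_erase hi)

def windowInf (w : ℤ → R) (d : ℕ) (k : ℤ) : Γ₀ :=
  (range d).inf fun i => v (w (k + i))

section Recurrence

variable {v} {c : ℕ → R} {d : ℕ} {w : ℤ → R}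
  (hrec : ∀ k : ℤ, ∑ i ∈ range (d + 1), c i * w (k - i) = 0) (hc : ∀ i, 0 ≤ v (c i))
include hrec hc

theorem windowInf_le_map_add (hc0 : v (c 0) = 0) (k : ℤ) :
    v.windowInf w d k ≤ v (w (k + d)) := by
  have key := v.le_map_of_sum_eq_zero (hrec (k + d)) (j := 0) (by simp)
    (g := v.windowInf w d k) fun i hi hi0 => by
      rw [mem_range] at hi
      rw [v.map_mul]
      refine le_add_of_nonneg_of_le (hc i)
        ((Finset.inf_le (mem_range.2 (by omega : d - i < d))).trans_eq ?_)
      congr 2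
      omega
  simpa [v.map_mul, hc0] using key

theorem windowInf_add_one_le_map (hcd : v (c d) = 0) (k : ℤ) :
    v.windowInf w d (k + 1) ≤ v (w k) := by
  have key := v.le_map_of_sum_eq_zero (hrec (k + d)) (j := d) (by simp)
    (g := v.windowInf w d (k + 1)) fun i hi hid => by
      rw [mem_range] at hi
      rw [v.map_mul]
      refine le_add_of_nonneg_of_le (hc i)
        ((Finset.inf_le (mem_range.2 (by omega : d - 1 - i < d))).trans_eq ?_)
      congr 2
      omega
  simpa [v.map_mul, hcd] using key

theorem windowInf_add_one (hc0 : v (c 0) = 0) (hcd : v (c d) = 0) (k : ℤ) :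
    v.windowInf w d (k + 1) = v.windowInf w d k := by
  apply le_antisymm <;> refine Finset.le_inf fun i hi => ?_ <;> rw [mem_range] at hi
  · rcases i with _ | i
    · simpa using windowInf_add_one_le_map hrec hc hcd k
    · refine (Finset.inf_le (mem_range.2 (by omega : i < d))).trans_eq ?_
      congr 2
      push_cast
      ring
  · by_cases hid : i + 1 < d
    · refine (Finset.inf_le (mem_range.2 hid)).trans_eq ?_
      congr 2
      push_cast
      ring
    · refine (windowInf_le_map_add hrec hc hc0 k).trans_eq ?_
      congr 2
      omega

theorem windowInf_eq_windowInf_zero (hc0 : v (c 0) = 0) (hcd : v (c d) = 0) (k : ℤ) :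
    v.windowInf w d k = v.windowInf w d 0 := by
  have hper : Function.Periodic (v.windowInf w d) 1 := windowInf_add_one hrec hc hc0 hcd
  simpa using hper.zsmul_eq k

theorem windowInf_zero_le_map (hc0 : v (c 0) = 0) (hcd : v (c d) = 0) (k : ℤ) :
    v.windowInf w d 0 ≤ v (w k) := by
  rw [← windowInf_eq_windowInf_zero hrec hc hc0 hcd (k - d)]
  simpa using windowInf_le_map_add hrec hc hc0 (k - d)

theorem exists_ge_map_eq_windowInf_zero (hc0 : v (c 0) = 0) (hcd : v (c d) = 0) (N : ℤ) :
    ∃ k, N ≤ k ∧ v (w k) = v.windowInf w d 0 := by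
  rcases d.eq_zero_or_pos with rfl | hd
  · exact ⟨N, le_rfl, le_antisymm (by simp [windowInf]) (windowInf_zero_le_map hrec hc hc0 hcd N)⟩
  · obtain ⟨i, -, hi⟩ :=
      exists_mem_eq_inf (range d) (nonempty_range_iff.2 hd.ne') fun i => v (w (N + i))
    exact ⟨N + i, by omega, hi ▸ windowInf_eq_windowInf_zero hrec hc hc0 hcd N⟩

end Recurrence

end AddValuation

theorem stmt13_general {K : Type*} [Field K] (v : K → WithTop ℤ)
    (hv0 : v 0 = ⊤)
    (hvmul : ∀ a b : K, v (a * b) = v a + v b)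
    (hvadd : ∀ a b : K, min (v a) (v b) ≤ v (a + b))
    (f : Polynomial K) (d : ℕ)
    (hint : ∀ i, 0 ≤ v (f.coeff i))
    (hf0 : v (f.coeff 0) = 0) (hfd : v (f.coeff d) = 0)
    (w : ℤ → K)
    (hconv : ∀ k : ℤ, ∑ i ∈ Finset.range (d + 1), f.coeff i * w (k - (i : ℤ)) = 0)
    (e : WithTop ℤ) (he : e = (Finset.range d).inf fun i => v (w (i : ℤ))) :
    (∃ N : ℤ, ∀ i : ℤ, N ≤ i → e ≤ v (w i)) ∧ (∀ N : ℤ, ∃ i : ℤ, N ≤ i ∧ v (w i) = e) := by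
  have hv1 : v 1 = 0 := by simpa [hf0] using (hvmul (f.coeff 0) 1).symm
  let V : AddValuation K (WithTop ℤ) := AddValuation.of v hv0 hv1 hvadd hvmul
  have he' : e = V.windowInf w d 0 := by simp [he, V, AddValuation.windowInf]
  subst he'
  exact ⟨⟨0, fun i _ => V.windowInf_zero_le_map hconv hint hf0 hfd i⟩,
    V.exists_ge_map_eq_windowInf_zero hconv hint hf0 hfd⟩

/-- Let `K` be a field with a discrete additive valuation `v : K → ℤ ∪ {∞}`.
Let `f ∈ K[T]` have degree `d`, nonzero constant coefficient, `v(f_i) ≥ 0` for all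
`i`, and `v(f_0) = v(f_d) = 0`.  Let `w = (w_i)_{i ∈ ℤ}` be a nonzero doubly
infinite sequence with `f·w = 0` (convolution), and let
`e = min { v(w_i) : 0 ≤ i ≤ d - 1 }`.  Then `liminf_{i → +∞} v(w_i) = e`, i.e.
`v(w_i) ≥ e` for all sufficiently large `i`, and `v(w_i) = e` for infinitely many
large `i`. -/
theorem stmt13 {K : Type*} [Field K] (v : K → WithTop ℤ)
    (hv0 : v 0 = ⊤)
    (hvmul : ∀ a b : K, v (a * b) = v a + v b)
    (hvadd : ∀ a b : K, min (v a) (v b) ≤ v (a + b))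
    (f : Polynomial K) (d : ℕ) (hd : f.natDegree = d) (h0 : f.coeff 0 ≠ 0)
    (hint : ∀ i, 0 ≤ v (f.coeff i))
    (hf0 : v (f.coeff 0) = 0) (hfd : v (f.coeff d) = 0)
    (w : ℤ → K) (hw : w ≠ 0)
    (hconv : ∀ k : ℤ, ∑ i ∈ Finset.range (d + 1), f.coeff i * w (k - (i : ℤ)) = 0)
    (e : WithTop ℤ) (he : e = (Finset.range d).inf fun i => v (w (i : ℤ))) :
    (∃ N : ℤ, ∀ i : ℤ, N ≤ i → e ≤ v (w i)) ∧ (∀ N : ℤ, ∃ i : ℤ, N ≤ i ∧ v (w i) = e) :=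
  stmt13_general v hv0 hvmul hvadd f d hint hf0 hfd w hconv e he
end

section
/- Let K be a field equipped with a discrete additive valuation v : K → ℤ ∪ {∞} (so v(0) = ∞, v(ab) = v(a) + v(b), and v(a+b) ≥ min(v(a), v(b))). Let f = f_1 · f_2 ⋯ f_r ∈ K[T] be a product of polynomials, where each f_j is nonzero with nonzero constant coefficient, splits into linear factors over K, and all roots of f_j have the same valuation c_j ∈ ℤ, with c_1, …, c_r pairwise distinct. Then every f-torsion element w ∈ W_f can be written as w = w_1 + ⋯ + w_r with w_j ∈ W_{f_j} for each j, and this decomposition is unique; that is, W_f is the internal direct sum of the subspaces W_{f_1}, …, W_{f_r}. -/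
/-!
A polynomial acts on `W` as the corresponding polynomial in the shift `w ↦ (k ↦ w (k - 1))`,
so `W_f` is the kernel of `f(shift)`. Two distinct factors `f_i`, `f_j` have no common root,
since their roots have different valuations; as `f_i` splits, this makes them coprime. For
pairwise coprime `q_i` and any endomorphism `φ`, the kernel of `(∏ q_i)(φ)` is the direct sum of
the kernels of the `q_i(φ)`: this is the coprime torsion decomposition of the `R[X]`-module in
which `X` acts as `φ`.
-/

/-- The property of a doubly infinite sequence `w : ℤ → K` being killed by the
convolution action of a polynomial `f ∈ K[T]`:
`(f·w)_k = Σ_i f_i w_{k-i} = 0` for all `k ∈ ℤ`. -/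
def PolyTorsion {K : Type*} [Field K] (f : Polynomial K) (w : ℤ → K) : Prop :=
  ∀ k : ℤ, ∑ i ∈ Finset.range (f.natDegree + 1), f.coeff i * w (k - (i : ℤ)) = 0

open Polynomial

namespace Polynomial

theorem isCoprime_of_splits_of_disjoint_roots {K : Type*} [Field K] {p q : K[X]}
    (hp : p.Splits) (hp0 : p ≠ 0) (hq0 : q ≠ 0) (h : ∀ x ∈ p.roots, x ∉ q.roots) :
    IsCoprime p q := by
  refine isCoprime_of_irreducible_dvd (fun h0 => hp0 h0.1) fun z hz hzp hzq => ?_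
  obtain ⟨x, hx⟩ := (hp.of_dvd hp0 hzp).exists_eval_eq_zero (degree_pos_of_irreducible hz).ne'
  exact h x ((mem_roots hp0).2 (IsRoot.dvd hx hzp)) ((mem_roots hq0).2 (IsRoot.dvd hx hzq))

end Polynomial

namespace Module.AEval'

variable {R M : Type*} [CommRing R] [AddCommGroup M] [Module R M]

theorem of_mem_torsionBy_iff (φ : Module.End R M) (p : R[X]) (x : M) :
    of φ x ∈ Submodule.torsionBy R[X] (AEval' φ) p ↔ aeval φ p x = 0 := by
  rw [Submodule.mem_torsionBy_iff, ← AEval.of_aeval_smul, LinearEquiv.map_eq_zero_iff]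
  rfl

open Function in
theorem existsUnique_sum_eq_of_aeval_prod_eq_zero {ι : Type*} [Fintype ι]
    (φ : Module.End R M) {q : ι → R[X]} (hq : Pairwise (IsCoprime on q)) {m : M}
    (hm : aeval φ (∏ i, q i) m = 0) :
    ∃! g : ι → M, (∀ i, aeval φ (q i) (g i) = 0) ∧ m = ∑ i, g i := by
  have hsup := Submodule.iSup_torsionBy_eq_torsionBy_prod (R := R[X]) (M := AEval' φ)
    (S := Finset.univ) (q := q) (hq.set_pairwise _)
  have hind := (Submodule.supIndep_torsionBy (R := R[X]) (M := AEval' φ)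
    (S := Finset.univ) (q := q) (hq.set_pairwise _)).iSupIndep_of_univ
  rw [iSupIndep_iff_finsetSum_eq_imp_eq] at hind
  obtain ⟨μ, hμ⟩ :=
    (Submodule.mem_iSup_finset_iff_exists_sum _ _).1 (hsup ▸ (of_mem_torsionBy_iff φ _ m).2 hm)
  refine ⟨fun i => (of φ).symm (μ i),
    ⟨fun i => (of_mem_torsionBy_iff φ _ _).1 (by simp [(μ i).2]), ?_⟩, ?_⟩
  · apply (of φ).injective
    simp [map_sum, hμ]
  · rintro g ⟨hg, rfl⟩
    funext i
    have hgμ := hind Finset.univ (fun i => of φ (g i)) (fun i => μ i)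
      (fun i _ => ⟨(of_mem_torsionBy_iff φ _ _).2 (hg i), (μ i).2⟩)
      (by rw [hμ, ← map_sum]) i (Finset.mem_univ i)
    simp [← hgμ]

end Module.AEval'

section Shift

variable (R : Type*) [CommSemiring R]

noncomputable def shift : Module.End R (ℤ → R) := LinearMap.funLeft R R (· - 1)

variable {R}

theorem shift_apply (w : ℤ → R) (k : ℤ) : shift R w k = w (k - 1) := rfl

theorem shift_pow_apply (n : ℕ) (w : ℤ → R) (k : ℤ) : (shift R ^ n) w k = w (k - n) := by
  induction n generalizing w with
  | zero => simp
  | succ n ih =>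
    rw [pow_succ, Module.End.mul_apply, ih, shift_apply, Nat.cast_succ, sub_add_eq_sub_sub]

theorem aeval_shift_apply (f : R[X]) (w : ℤ → R) (k : ℤ) :
    aeval (shift R) f w k = ∑ i ∈ Finset.range (f.natDegree + 1), f.coeff i * w (k - i) := by
  simp [aeval_eq_sum_range, LinearMap.sum_apply, shift_pow_apply]

theorem polyTorsion_iff_aeval_shift_eq_zero {K : Type*} [Field K] (f : K[X]) (w : ℤ → K) :
    PolyTorsion f w ↔ aeval (shift K) f w = 0 := by
  simp only [PolyTorsion, funext_iff, aeval_shift_apply, Pi.zero_apply]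

end Shift

theorem stmt16_general {K : Type*} [Field K] (v : K → WithTop ℤ)
    (r : ℕ) (F : Fin r → Polynomial K) (c : Fin r → ℤ)
    (hne : ∀ j, F j ≠ 0)
    (hsplit : ∀ j, Polynomial.Splits ((F j).map (RingHom.id K)))
    (hroots : ∀ j, ∀ x ∈ (F j).roots, v x = (c j : WithTop ℤ))
    (hcinj : Function.Injective c)
    (w : ℤ → K) (hw : PolyTorsion (∏ j, F j) w) :
    ∃! g : Fin r → ℤ → K, (∀ j, PolyTorsion (F j) (g j)) ∧ w = ∑ j, g j := by
  have hcop : Pairwise (Function.onFun IsCoprime F) := fun i j hij =>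
    isCoprime_of_splits_of_disjoint_roots (by simpa using hsplit i) (hne i) (hne j)
      fun x hi hj => hij (hcinj (WithTop.coe_injective ((hroots i x hi).symm.trans (hroots j x hj))))
  simp only [polyTorsion_iff_aeval_shift_eq_zero] at hw ⊢
  exact Module.AEval'.existsUnique_sum_eq_of_aeval_prod_eq_zero (shift K) hcop hw

/-- Let `K` be a field with a discrete additive valuation `v`, and let
`f = f_1 ⋯ f_r ∈ K[T]` be a product of polynomials, each nonzero with nonzero
constant coefficient, each splitting into linear factors over `K`, with all roots of
`f_j` of the same valuation `c_j`, the `c_j` pairwise distinct.  Then every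
`f`-torsion doubly infinite sequence `w` decomposes uniquely as `w = w_1 + ⋯ + w_r`
with `w_j` an `f_j`-torsion sequence: `W_f` is the internal direct sum of the
`W_{f_j}`. -/
theorem stmt16 {K : Type*} [Field K] (v : K → WithTop ℤ)
    (hv0 : v 0 = ⊤)
    (hvmul : ∀ a b : K, v (a * b) = v a + v b)
    (hvadd : ∀ a b : K, min (v a) (v b) ≤ v (a + b))
    (r : ℕ) (F : Fin r → Polynomial K) (c : Fin r → ℤ)
    (hne : ∀ j, F j ≠ 0)
    (h0 : ∀ j, (F j).coeff 0 ≠ 0)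
    (hsplit : ∀ j, Polynomial.Splits ((F j).map (RingHom.id K)))
    (hroots : ∀ j, ∀ x ∈ (F j).roots, v x = (c j : WithTop ℤ))
    (hcinj : Function.Injective c)
    (w : ℤ → K) (hw : PolyTorsion (∏ j, F j) w) :
    ∃! g : Fin r → ℤ → K, (∀ j, PolyTorsion (F j) (g j)) ∧ w = ∑ j, g j :=
  stmt16_general v r F c hne hsplit hroots hcinj w hw
end
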